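/- In the iCGS G_simple of Figure 2 (states s_init, s'_init, s_lb, s'_lb, s_gen, s_tr, s^1_amb, s^2_amb, s^1_namb, s^2_namb, s_err; agents 1 and 2 each with actions {ok, ¬ok}; transitions as specified, where every non-(ok,ok) joint action in a non-ambiguous state leads to s_err, and ambiguous states never lead to s_err), there is exactly one joint uniform strategy for coalition {1,2} such that no outcome ever reaches s_err: the strategy playing (ok, ok) at every history. -/

import Mathlib

/-- A concurrent game structure with imperfect information (iCGS). -/
structure iCGS (Ag S Act AP : Type) where
  init : S
  obs : Ag → S → S → Prop
  obsEquiv : ∀ i, Equivalence (obs i)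
  protocol : Ag → S → Set Act
  protNe : ∀ i s, (protocol i s).Nonempty
  protObs : ∀ i s s', obs i s s' → protocol i s = protocol i s'
  trans : S → (Ag → Act) → S → Prop
  transSerial : ∀ s α, (∀ i, α i ∈ protocol i s) → ∃ s', trans s α s'
  label : S → Set AP

/-- A history: an initial state followed by a finite list of (joint action, state) steps. -/
structure Hist (Ag S Act : Type) where
  start : S
  steps : List ((Ag → Act) × S)

variable {Ag S Act AP S' Act' : Type}

/-- The last state of a history. -/
def histLast (h : Hist Ag S Act) : S :=
  (h.steps.getLast?.map Prod.snd).getD h.start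

/-- Synchronous extension of agent `i`'s indistinguishability relation to histories:
same length (enforced by `Forall₂`), pointwise indistinguishable states, and the
same actions of agent `i` at every step. -/
def indist (G : iCGS Ag S Act AP) (i : Ag) (h h' : Hist Ag S Act) : Prop :=
  G.obs i h.start h'.start ∧
    List.Forall₂ (fun p q => p.1 i = q.1 i ∧ G.obs i p.2 q.2) h.steps h'.steps
/-- The common knowledge relation of a coalition `A`: transitive closure of the
union of the individual indistinguishability relations. -/
def ckRel (G : iCGS Ag S Act AP) (A : Set Ag) :
    Hist Ag S Act → Hist Ag S Act → Prop :=
  Relation.TransGen (fun h h' => ∃ i ∈ A, indist G i h h')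

/-- The common knowledge neighbourhood of a history `h` for coalition `A`. -/
def CKN (G : iCGS Ag S Act AP) (A : Set Ag) (h : Hist Ag S Act) :
    Set (Hist Ag S Act) :=
  { h' | ckRel G A h' h }
/-- An infinite path: a start state and an infinite sequence of (joint action, state) steps. -/
structure GPath (Ag S Act : Type) where
  start : S
  steps : ℕ → (Ag → Act) × S

/-- The prefix of a path of length `j` (i.e. with `j` steps), as a history. -/
def pathPrefix (lam : GPath Ag S Act) (j : ℕ) : Hist Ag S Act :=
  ⟨lam.start, (List.range j).map lam.steps⟩

/-- A (joint) uniform memoryful strategy for coalition `A`: each agent of `A` plays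
enabled actions and acts identically on indistinguishable histories. -/
def IsUniformStrat (G : iCGS Ag S Act AP) (A : Set Ag)
    (σ : Ag → Hist Ag S Act → Act) : Prop :=
  ∀ i ∈ A, (∀ h, σ i h ∈ G.protocol i (histLast h)) ∧
    ∀ h h', indist G i h h' → σ i h = σ i h'

/-- Objective outcomes of strategy `σ` (for coalition `A`) at history `h`. -/
def outObj (G : iCGS Ag S Act AP) (A : Set Ag) (h : Hist Ag S Act)
    (σ : Ag → Hist Ag S Act → Act) : Set (GPath Ag S Act) :=
  { lam | pathPrefix lam h.steps.length = h ∧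
      ∀ j, h.steps.length ≤ j →
        (∀ i ∈ A, (lam.steps j).1 i = σ i (pathPrefix lam j)) ∧
        G.trans (histLast (pathPrefix lam j)) (lam.steps j).1 (lam.steps j).2 }

/-- Subjective outcomes of strategy `σ` at history `h`. -/
def outSubj (G : iCGS Ag S Act AP) (A : Set Ag) (h : Hist Ag S Act)
    (σ : Ag → Hist Ag S Act → Act) : Set (GPath Ag S Act) :=
  { lam | ∃ i ∈ A, ∃ h', indist G i h' h ∧ lam ∈ outObj G A h' σ }

/-- Common knowledge outcomes of strategy `σ` at history `h`. -/
def outCk (G : iCGS Ag S Act AP) (A : Set Ag) (h : Hist Ag S Act)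
    (σ : Ag → Hist Ag S Act → Act) : Set (GPath Ag S Act) :=
  { lam | ∃ h' ∈ CKN G A h, lam ∈ outObj G A h' σ }

/-- States of the iCGS `G_simple` of Figure 2. -/
inductive St : Type
  | sinit | sinit' | slb | slb' | sgen | str
  | samb1 | samb2 | snamb1 | snamb2 | serr
deriving DecidableEq

/-- Actions of agents 1 and 2: `ok` and `¬ok`. -/
inductive SAct : Type
  | ok | nok
deriving DecidableEq

/-- The joint action `(ok, ok)`. -/
def allOk (α : Fin 2 → SAct) : Prop := α 0 = SAct.ok ∧ α 1 = SAct.ok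

/-- Transition relation of `G_simple` (the nondeterminism at `sinit`, `sgen`,
`str` is the one resolved by agent 3). -/
def strans : St → (Fin 2 → SAct) → St → Prop
  | .sinit, α, t => (allOk α ∧ (t = .sinit' ∨ t = .sgen)) ∨ (¬ allOk α ∧ t = .serr)
  | .sinit', α, t => (allOk α ∧ t = .slb) ∨ (¬ allOk α ∧ t = .serr)
  | .slb, α, t => (allOk α ∧ t = .slb') ∨ (¬ allOk α ∧ t = .serr)
  | .slb', α, t => (allOk α ∧ t = .slb') ∨ (¬ allOk α ∧ t = .serr)
  | .sgen, α, t => (allOk α ∧ (t = .str ∨ t = .samb1)) ∨ (¬ allOk α ∧ t = .serr)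
  | .str, α, t => (allOk α ∧ (t = .sgen ∨ t = .samb2)) ∨ (¬ allOk α ∧ t = .serr)
  | .samb1, _, t => t = .snamb1
  | .samb2, _, t => t = .snamb2
  | .snamb1, α, t => (allOk α ∧ t = .samb1) ∨ (¬ allOk α ∧ t = .serr)
  | .snamb2, α, t => (allOk α ∧ t = .samb2) ∨ (¬ allOk α ∧ t = .serr)
  | .serr, _, t => t = .serr

theorem strans_serial : ∀ s α, ∃ t, strans s α t := by
  intro s α
  by_cases h : allOk α <;> cases s
  all_goals first
    | exact ⟨.sinit', Or.inl ⟨h, Or.inl rfl⟩⟩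
    | exact ⟨.slb, Or.inl ⟨h, rfl⟩⟩
    | exact ⟨.slb', Or.inl ⟨h, rfl⟩⟩
    | exact ⟨.str, Or.inl ⟨h, Or.inl rfl⟩⟩
    | exact ⟨.sgen, Or.inl ⟨h, Or.inl rfl⟩⟩
    | exact ⟨.samb1, Or.inl ⟨h, rfl⟩⟩
    | exact ⟨.samb2, Or.inl ⟨h, rfl⟩⟩
    | exact ⟨.snamb1, rfl⟩
    | exact ⟨.snamb2, rfl⟩
    | exact ⟨.serr, rfl⟩
    | exact ⟨.serr, Or.inr ⟨h, rfl⟩⟩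

/-- Observation classes: agent 1 distinguishes only `sgen`, `serr` and the rest;
agent 2 distinguishes only `str`, `serr` and the rest. -/
def obsf : Fin 2 → St → Fin 3 :=
  fun i s =>
    if i = 0 then (match s with | .sgen => 0 | .serr => 1 | _ => 2)
    else (match s with | .str => 0 | .serr => 1 | _ => 2)

/-- The iCGS `G_simple` of Figure 2 (atoms are irrelevant). -/
def Gsimple : iCGS (Fin 2) St SAct Unit where
  init := .sinit
  obs := fun i s s' => obsf i s = obsf i s'
  obsEquiv := fun _ => ⟨fun _ => rfl, Eq.symm, Eq.trans⟩
  protocol := fun _ _ => Set.univ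
  protNe := fun _ _ => ⟨SAct.ok, trivial⟩
  protObs := fun _ _ _ _ => rfl
  trans := strans
  transSerial := fun s α _ => strans_serial s α
  label := fun _ => ∅

/-- A joint strategy avoids the error state if no objective outcome from the
initial history ever visits `serr`. -/
def AvoidsErr (σ : Fin 2 → Hist (Fin 2) St SAct → SAct) : Prop :=
  ∀ lam ∈ outObj Gsimple Set.univ ⟨St.sinit, []⟩ σ,
    ∀ j : ℕ, histLast (pathPrefix lam j) ≠ St.serr

/-- A history is compatible with `σ` if it is a prefix of some outcome of `σ`
from the initial history. -/
def CompatibleHist (σ : Fin 2 → Hist (Fin 2) St SAct → SAct)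
    (h : Hist (Fin 2) St SAct) : Prop :=
  ∃ lam ∈ outObj Gsimple Set.univ ⟨St.sinit, []⟩ σ,
    pathPrefix lam h.steps.length = h


/-!
At a non-ambiguous state every joint action other than `(ok, ok)` may lead to `serr`, so an
error-avoiding strategy must play `(ok, ok)` there. At `samb1` and `samb2` the game does not
force anything, but uniformity does. By induction on the length of histories, a uniform
error-avoiding strategy plays `(ok, ok)` on all shorter plays, so its plays of the current length
are the `(ok, ok)`-runs. For each agent, every run ending in an ambiguous state has an
indistinguishable twin run ending in a non-ambiguous state (for agent 1, `sgen samb1` is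
confused with `sgen str`, and `sgen str samb2` with `sgen samb1 snamb1`, and so on), where the
strategy must play `ok`, hence it plays `ok` on the original run as well.
-/

namespace Hist

def snoc (h : Hist Ag S Act) (x : (Ag → Act) × S) : Hist Ag S Act :=
  ⟨h.start, h.steps ++ [x]⟩

@[simp]
lemma length_steps_snoc (h : Hist Ag S Act) (x : (Ag → Act) × S) :
    (h.snoc x).steps.length = h.steps.length + 1 := by
  simp [snoc]

lemma snoc_inj {h h' : Hist Ag S Act} {x x' : (Ag → Act) × S} :
    h.snoc x = h'.snoc x' ↔ h = h' ∧ x = x' := by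
  cases h; cases h'
  simp [snoc, and_assoc]

end Hist

@[simp]
lemma histLast_snoc (h : Hist Ag S Act) (x : (Ag → Act) × S) : histLast (h.snoc x) = x.2 := by
  simp [histLast, Hist.snoc]

lemma pathPrefix_succ (lam : GPath Ag S Act) (j : ℕ) :
    pathPrefix lam (j + 1) = (pathPrefix lam j).snoc (lam.steps j) := by
  simp [pathPrefix, Hist.snoc, List.range_succ]

lemma indist_refl (G : iCGS Ag S Act AP) (i : Ag) (h : Hist Ag S Act) : indist G i h h :=
  ⟨(G.obsEquiv i).refl _, List.forall₂_same.2 fun _ _ => ⟨rfl, (G.obsEquiv i).refl _⟩⟩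

lemma indist.snoc {G : iCGS Ag S Act AP} {i : Ag} {h h' : Hist Ag S Act}
    {x y : (Ag → Act) × S} (hh : indist G i h h') (hact : x.1 i = y.1 i)
    (hobs : G.obs i x.2 y.2) : indist G i (h.snoc x) (h'.snoc y) :=
  ⟨hh.1, List.rel_append hh.2 (.cons ⟨hact, hobs⟩ .nil)⟩

inductive IsPlay (G : iCGS Ag S Act AP) (σ : Ag → Hist Ag S Act → Act) :
    Hist Ag S Act → Prop
  | init : IsPlay G σ ⟨G.init, []⟩
  | snoc {h : Hist Ag S Act} {s : S} :
      IsPlay G σ h → G.trans (histLast h) (fun i => σ i h) s →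
        IsPlay G σ (h.snoc (fun i => σ i h, s))

section Outcomes

variable {G : iCGS Ag S Act AP} {σ : Ag → Hist Ag S Act → Act}

lemma isPlay_pathPrefix {lam : GPath Ag S Act}
    (hlam : lam ∈ outObj G Set.univ ⟨G.init, []⟩ σ) (j : ℕ) :
    IsPlay G σ (pathPrefix lam j) := by
  induction j with
  | zero => exact hlam.1 ▸ .init
  | succ j ih =>
    obtain ⟨hact, htrans⟩ := hlam.2 j j.zero_le
    have hstep : lam.steps j = (fun i => σ i (pathPrefix lam j), (lam.steps j).2) :=
      Prod.ext (funext fun i => hact i trivial) rfl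
    rw [hstep] at htrans
    rw [pathPrefix_succ, hstep]
    exact ih.snoc htrans

def extendStep (σ : Ag → Hist Ag S Act → Act) (next : Hist Ag S Act → S)
    (h : Hist Ag S Act) (n : ℕ) (p : Hist Ag S Act) : (Ag → Act) × S :=
  h.steps[n]?.getD (fun i => σ i p, next p)

def extendPrefix (σ : Ag → Hist Ag S Act → Act) (next : Hist Ag S Act → S)
    (h : Hist Ag S Act) : ℕ → Hist Ag S Act
  | 0 => ⟨h.start, []⟩
  | n + 1 => (extendPrefix σ next h n).snoc (extendStep σ next h n (extendPrefix σ next h n))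

/-- The path that follows `h` and then lets `σ` choose the actions and `next` the successors. -/
def extendPath (σ : Ag → Hist Ag S Act → Act) (next : Hist Ag S Act → S)
    (h : Hist Ag S Act) : GPath Ag S Act :=
  ⟨h.start, fun n => extendStep σ next h n (extendPrefix σ next h n)⟩

lemma pathPrefix_extendPath (next : Hist Ag S Act → S) (h : Hist Ag S Act) (n : ℕ) :
    pathPrefix (extendPath σ next h) n = extendPrefix σ next h n := by
  induction n with
  | zero => rfl
  | succ n ih => rw [pathPrefix_succ, ih]; rfl

lemma extendPrefix_of_le (next : Hist Ag S Act → S) (h : Hist Ag S Act) {n : ℕ}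
    (hn : n ≤ h.steps.length) : extendPrefix σ next h n = ⟨h.start, h.steps.take n⟩ := by
  induction n with
  | zero => rfl
  | succ n ih =>
    have hn' : n < h.steps.length := by omega
    rw [extendPrefix, ih hn'.le, extendStep, List.getElem?_eq_getElem hn', Option.getD_some,
      Hist.snoc, List.take_add_one, List.getElem?_eq_getElem hn']
    rfl

lemma outObj_nonempty (hσ : ∀ i h, σ i h ∈ G.protocol i (histLast h)) (h : Hist Ag S Act) :
    (outObj G Set.univ h σ).Nonempty := by
  choose next hnext using fun p : Hist Ag S Act =>
    G.transSerial (histLast p) (fun i => σ i p) (fun i => hσ i p)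
  refine ⟨extendPath σ next h, ?_, fun j hj => ?_⟩
  · rw [pathPrefix_extendPath, extendPrefix_of_le next h le_rfl, List.take_length]
  · have hstep : (extendPath σ next h).steps j =
        (fun i => σ i (extendPrefix σ next h j), next (extendPrefix σ next h j)) := by
      simp [extendPath, extendStep, List.getElem?_eq_none hj]
    rw [hstep, pathPrefix_extendPath]
    exact ⟨fun i _ => rfl, hnext _⟩

lemma outObj_snoc_subset {h : Hist Ag S Act} {s : S}
    (ht : G.trans (histLast h) (fun i => σ i h) s) :
    outObj G Set.univ (h.snoc (fun i => σ i h, s)) σ ⊆ outObj G Set.univ h σ := by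
  rintro lam ⟨hpre, hsteps⟩
  rw [Hist.length_steps_snoc, pathPrefix_succ, Hist.snoc_inj] at hpre
  obtain ⟨hpre, hlast⟩ := hpre
  refine ⟨hpre, fun j hj => ?_⟩
  obtain rfl | hj := hj.eq_or_lt
  · rw [hlast, hpre]
    exact ⟨fun i _ => rfl, ht⟩
  · exact hsteps j (by simpa using hj)

lemma IsPlay.outObj_subset {h : Hist Ag S Act} (hp : IsPlay G σ h) :
    outObj G Set.univ h σ ⊆ outObj G Set.univ ⟨G.init, []⟩ σ := by
  induction hp with
  | init => exact subset_rfl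
  | snoc _ ht ih => exact (outObj_snoc_subset ht).trans ih

theorem exists_outObj_iff_isPlay (hσ : ∀ i h, σ i h ∈ G.protocol i (histLast h))
    {h : Hist Ag S Act} :
    (∃ lam ∈ outObj G Set.univ ⟨G.init, []⟩ σ, pathPrefix lam h.steps.length = h) ↔
      IsPlay G σ h := by
  refine ⟨fun ⟨lam, hlam, hpre⟩ => hpre ▸ isPlay_pathPrefix hlam _, fun hp => ?_⟩
  obtain ⟨lam, hlam⟩ := outObj_nonempty hσ h
  exact ⟨lam, hp.outObj_subset hlam, hlam.1⟩

theorem isPlay_iff_of_agree {τ : Ag → Hist Ag S Act → Act} {n : ℕ}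
    (hagree : ∀ h', IsPlay G σ h' → h'.steps.length < n → ∀ i, σ i h' = τ i h')
    {h : Hist Ag S Act} (hn : h.steps.length ≤ n) : IsPlay G σ h ↔ IsPlay G τ h := by
  constructor
  · intro hp
    induction hp with
    | init => exact .init
    | snoc hp ht ih =>
      rw [Hist.length_steps_snoc] at hn
      rw [funext (hagree _ hp (by omega))] at ht ⊢
      exact (ih (by omega)).snoc ht
  · intro hp
    induction hp with
    | init => exact .init
    | snoc _ ht ih =>
      rw [Hist.length_steps_snoc] at hn
      have hp := ih (by omega)
      rw [← funext (hagree _ hp (by omega))] at ht ⊢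
      exact hp.snoc ht

end Outcomes

/-- Intended meaning of `R a b`: each `α`-play ending in `a` has an `i`-indistinguishable twin
ending in some `b` with `R a b`. The twin of a play either branches off at its last step,
or extends a twin of the play without its last step. -/
structure IsTwinRelation (G : iCGS Ag S Act AP) (α : Ag → Act) (i : Ag) (R : S → S → Prop) :
    Prop where
  obs : ∀ a b, R a b → G.obs i a b
  not_init : ∀ b, ¬ R G.init b
  step : ∀ p a, G.trans p α a → (∃ b, R a b) →
    (∃ b, R a b ∧ G.trans p α b) ∨
      ((∃ b, R p b) ∧ ∀ b, R p b → ∃ b', R a b' ∧ G.trans b α b')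

theorem IsTwinRelation.exists_indist {G : iCGS Ag S Act AP} {α : Ag → Act} {i : Ag}
    {R : S → S → Prop} (hR : IsTwinRelation G α i R) {h : Hist Ag S Act}
    (hp : IsPlay G (fun j _ => α j) h) (hdom : ∃ b, R (histLast h) b) :
    ∃ h', IsPlay G (fun j _ => α j) h' ∧ indist G i h h' ∧ R (histLast h) (histLast h') := by
  induction hp with
  | init => exact hdom.elim fun b hb => (hR.not_init b hb).elim
  | @snoc h₀ a hp₀ ht ih =>
    rw [histLast_snoc] at hdom ⊢
    rcases hR.step _ a ht hdom with ⟨b, hab, hb⟩ | ⟨hdom₀, htwin⟩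
    · exact ⟨_, hp₀.snoc hb, (indist_refl G i h₀).snoc rfl (hR.obs _ _ hab), by simpa using hab⟩
    · obtain ⟨h₀', hp₀', hind, hR₀⟩ := ih hdom₀
      obtain ⟨b, hab, hb⟩ := htwin _ hR₀
      exact ⟨_, hp₀'.snoc hb, hind.snoc rfl (hR.obs _ _ hab), by simpa using hab⟩

lemma strans_serr_of_not_allOk {s : St} {α : Fin 2 → SAct} (h₁ : s ≠ .samb1) (h₂ : s ≠ .samb2)
    (hα : ¬ allOk α) : strans s α .serr := by
  cases s <;> simp_all [strans]

lemma strans_ok_ne_serr {s t : St} (hs : s ≠ .serr) (ht : strans s (fun _ => SAct.ok) t) :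
    t ≠ .serr := by
  rintro rfl
  cases s <;> simp_all [strans, allOk]

lemma isPlay_ok_histLast_ne_serr {h : Hist (Fin 2) St SAct}
    (hp : IsPlay Gsimple (fun _ _ => SAct.ok) h) : histLast h ≠ .serr := by
  induction hp with
  | init => simp [histLast, Gsimple]
  | snoc _ ht ih => exact (histLast_snoc _ _).symm ▸ strans_ok_ne_serr ih ht

lemma avoidsErr_ok : AvoidsErr (fun _ _ => SAct.ok) :=
  fun _ hlam j => isPlay_ok_histLast_ne_serr (isPlay_pathPrefix hlam j)

section Avoiding

variable {σ : Fin 2 → Hist (Fin 2) St SAct → SAct} {h : Hist (Fin 2) St SAct}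

lemma AvoidsErr.histLast_ne_serr (hav : AvoidsErr σ) (hp : IsPlay Gsimple σ h) :
    histLast h ≠ .serr := by
  obtain ⟨lam, hlam, hpre⟩ := (exists_outObj_iff_isPlay (G := Gsimple) (fun _ _ => trivial)).2 hp
  exact hpre ▸ hav lam hlam _

lemma AvoidsErr.eq_ok_of_not_amb (hav : AvoidsErr σ) (hp : IsPlay Gsimple σ h)
    (h₁ : histLast h ≠ .samb1) (h₂ : histLast h ≠ .samb2) (i : Fin 2) : σ i h = .ok := by
  by_contra hne
  have hα : ¬ allOk (fun j => σ j h) := by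
    rintro ⟨h0, h1⟩
    fin_cases i <;> contradiction
  exact hav.histLast_ne_serr (hp.snoc (strans_serr_of_not_allOk h₁ h₂ hα)) (histLast_snoc _ _)

end Avoiding

/-- Index `0` is the paper's agent 1, who observes `sgen`; index `1` is agent 2, who observes
`str`. -/
def twin : Fin 2 → St → St → Prop
  | 0, .samb1, b => b = .str ∨ b = .snamb2
  | 0, .snamb1, b => b = .samb2
  | 0, .samb2, b => b = .snamb1
  | 0, .snamb2, b => b = .samb1
  | 0, .str, b => b = .samb1
  | 1, .samb1, b => b = .snamb2 ∨ b = .slb ∨ b = .slb'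
  | 1, .snamb1, b => b = .samb2 ∨ b = .slb'
  | 1, .samb2, b => b = .sgen ∨ b = .snamb1
  | 1, .snamb2, b => b = .samb1
  | 1, .sgen, b => b = .sinit' ∨ b = .samb2
  | _, _, _ => False

lemma isTwinRelation_twin (i : Fin 2) :
    IsTwinRelation Gsimple (fun _ => SAct.ok) i (twin i) where
  obs a b hab := by
    fin_cases i <;> cases a <;> simp [twin] at hab <;> rcases hab with rfl | rfl | rfl <;> rfl
  not_init b := by fin_cases i <;> simp [twin, Gsimple]
  step p a hpa hdom := by
    fin_cases i <;> cases p <;> cases a <;> simp_all [twin, Gsimple, strans, allOk]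

lemma twin_of_amb {i : Fin 2} {a : St} (ha : a = .samb1 ∨ a = .samb2) :
    (∃ b, twin i a b) ∧ ∀ b, twin i a b → b ≠ .samb1 ∧ b ≠ .samb2 := by
  fin_cases i <;> rcases ha with rfl | rfl <;> simp [twin]

lemma exists_twin (i : Fin 2) {h : Hist (Fin 2) St SAct}
    (hp : IsPlay Gsimple (fun _ _ => SAct.ok) h)
    (hamb : histLast h = .samb1 ∨ histLast h = .samb2) :
    ∃ h', IsPlay Gsimple (fun _ _ => SAct.ok) h' ∧ indist Gsimple i h h' ∧
      histLast h' ≠ .samb1 ∧ histLast h' ≠ .samb2 := by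
  obtain ⟨hdom, hnamb⟩ := twin_of_amb (i := i) hamb
  obtain ⟨h', hp', hind, htwin⟩ := (isTwinRelation_twin i).exists_indist hp hdom
  exact ⟨h', hp', hind, hnamb _ htwin⟩

theorem eq_ok_of_isPlay {σ : Fin 2 → Hist (Fin 2) St SAct → SAct}
    (hu : IsUniformStrat Gsimple Set.univ σ) (hav : AvoidsErr σ) {h : Hist (Fin 2) St SAct}
    (hp : IsPlay Gsimple σ h) (i : Fin 2) : σ i h = .ok := by
  obtain ⟨n, hn⟩ : ∃ n, h.steps.length = n := ⟨_, rfl⟩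
  induction n using Nat.strong_induction_on generalizing h i with
  | _ n ih =>
    have hagree : ∀ h', IsPlay Gsimple σ h' → h'.steps.length < n →
        ∀ j, σ j h' = (fun _ _ => SAct.ok) j h' :=
      fun h' hp' hlt j => ih _ hlt hp' j rfl
    by_cases hamb : histLast h = .samb1 ∨ histLast h = .samb2
    · obtain ⟨h', hp', hind, h₁, h₂⟩ :=
        exists_twin i ((isPlay_iff_of_agree hagree hn.le).1 hp) hamb
      have hn' : h'.steps.length ≤ n := hn ▸ hind.2.length_eq.ge
      rw [(hu i trivial).2 h h' hind]
      exact hav.eq_ok_of_not_amb ((isPlay_iff_of_agree hagree hn').2 hp') h₁ h₂ i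
    · push Not at hamb
      exact hav.eq_ok_of_not_amb hp hamb.1 hamb.2 i

/-- in `G_simple` there is exactly one joint uniform strategy for
coalition `{1,2}` whose outcomes never reach `serr`: playing `(ok, ok)` at every
history. -/
theorem Gsimple_unique_avoiding_strategy :
    (IsUniformStrat Gsimple Set.univ (fun _ _ => SAct.ok) ∧
      AvoidsErr (fun _ _ => SAct.ok)) ∧
    (∀ σ, IsUniformStrat Gsimple Set.univ σ → AvoidsErr σ →
      ∀ i h, CompatibleHist σ h → σ i h = SAct.ok) := by
  refine ⟨⟨fun _ _ => ⟨fun _ => trivial, fun _ _ _ => rfl⟩, avoidsErr_ok⟩, ?_⟩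
  intro σ hu hav i h hc
  have hp := (exists_outObj_iff_isPlay (G := Gsimple) (fun _ _ => trivial)).1 hc
  exact eq_ok_of_isPlay hu hav hp i
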